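/- arXiv:2001.00118 — 4 statements merged into one kernel-verified Lean document; each statement's English description precedes it below -/
import Mathlib

section
/- Let n ≥ 2 and let λ ∈ ℝ be a constant. If ξ satisfies the constant-λ plus-sign torsion system on ℝⁿ, then for every index j = 1,…,n and every x ∈ ℝⁿ one has Δξ^j(x) + (n − 2) ∂²ξ^j/∂(x^j)²(x) = 0, where Δ = Σ_i ∂²/∂(x^i)² is the Euclidean Laplacian. -/
noncomputable section

/-- The map `ξ` satisfies the constant-`lam` plus-sign torsion system on `ℝⁿ`:
`∂ξ^i/∂x^i = lam + 2⟨x, ξ x⟩/(|x|² + 1)` for every `i`, and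
`∂ξ^i/∂x^j + ∂ξ^j/∂x^i = 0` for all `i ≠ j`. -/
def ConstPlusTorsionSystem (n : ℕ)
    (ξ : EuclideanSpace ℝ (Fin n) → EuclideanSpace ℝ (Fin n))
    (lam : ℝ) : Prop :=
  (∀ (i : Fin n) (x : EuclideanSpace ℝ (Fin n)),
      fderiv ℝ ξ x (EuclideanSpace.single i 1) i
        = lam + 2 * (∑ k, x k * ξ x k) / (‖x‖ ^ 2 + 1)) ∧
  (∀ (i j : Fin n), i ≠ j → ∀ x : EuclideanSpace ℝ (Fin n),
      fderiv ℝ ξ x (EuclideanSpace.single j 1) i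
        + fderiv ℝ ξ x (EuclideanSpace.single i 1) j = 0)

theorem harmonicity_formula (n : ℕ) (hn : 2 ≤ n)
    (ξ : EuclideanSpace ℝ (Fin n) → EuclideanSpace ℝ (Fin n))
    (lam : ℝ)
    (hξ : ContDiff ℝ (⊤ : ℕ∞) ξ)
    (hsys : ConstPlusTorsionSystem n ξ lam) :
    ∀ (j : Fin n) (x : EuclideanSpace ℝ (Fin n)),
      (∑ i, fderiv ℝ (fun y : EuclideanSpace ℝ (Fin n) =>
          fderiv ℝ ξ y (EuclideanSpace.single i 1) j) x (EuclideanSpace.single i 1))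
        + ((n : ℝ) - 2) *
            fderiv ℝ (fun y : EuclideanSpace ℝ (Fin n) =>
              fderiv ℝ ξ y (EuclideanSpace.single j 1) j) x (EuclideanSpace.single j 1)
        = 0 := by
  classical
  obtain ⟨h1, h2⟩ := hsys
  intro j x
  have hdξ : Differentiable ℝ ξ := hξ.differentiable (by simp)
  have hdf : Differentiable ℝ (fderiv ℝ ξ) :=
    (hξ.fderiv_right (m := 1) (WithTop.coe_le_coe.mpr le_top)).differentiable one_ne_zero
  have key : ∀ (v : EuclideanSpace ℝ (Fin n)) (k : Fin n) (y w : EuclideanSpace ℝ (Fin n)),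
      fderiv ℝ (fun z => fderiv ℝ ξ z v k) y w
        = fderiv ℝ (fderiv ℝ ξ) y w v k := by
    intro v k y w
    have h : (fun z => fderiv ℝ ξ z v k)
        = ((EuclideanSpace.proj k).comp
            (ContinuousLinearMap.apply ℝ (EuclideanSpace ℝ (Fin n)) v)) ∘ (fderiv ℝ ξ) :=
      rfl
    rw [h, (((EuclideanSpace.proj k).comp
        (ContinuousLinearMap.apply ℝ (EuclideanSpace ℝ (Fin n)) v)).hasFDerivAt.comp y
        (hdf y).hasFDerivAt).fderiv]
    rfl
  have symm : ∀ (y v w : EuclideanSpace ℝ (Fin n)),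
      fderiv ℝ (fderiv ℝ ξ) y v w = fderiv ℝ (fderiv ℝ ξ) y w v := fun y v w =>
    second_derivative_symmetric (fun z => (hdξ z).hasFDerivAt) ((hdf y).hasFDerivAt) v w
  set T : ℝ := fderiv ℝ (fun y => fderiv ℝ ξ y (EuclideanSpace.single j 1) j) x
      (EuclideanSpace.single j 1) with hT
  have hdiag : ∀ i : Fin n,
      (fun y : EuclideanSpace ℝ (Fin n) => fderiv ℝ ξ y (EuclideanSpace.single i 1) i)
      = (fun y : EuclideanSpace ℝ (Fin n) => fderiv ℝ ξ y (EuclideanSpace.single j 1) j) := by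
    intro i
    funext y
    rw [h1 i y, h1 j y]
  have hterm : ∀ i : Fin n,
      fderiv ℝ (fun y => fderiv ℝ ξ y (EuclideanSpace.single i 1) j) x
        (EuclideanSpace.single i 1)
        = if i = j then T else -T := by
    intro i
    by_cases hij : i = j
    · simp [hij, hT]
    · rw [if_neg hij]
      have hneg : (fun y : EuclideanSpace ℝ (Fin n) =>
            fderiv ℝ ξ y (EuclideanSpace.single i 1) j)
          = fun y : EuclideanSpace ℝ (Fin n) =>
            -(fderiv ℝ ξ y (EuclideanSpace.single j 1) i) := by
        funext y
        have := h2 i j hij y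
        linarith
      rw [hneg, fderiv_fun_neg]
      simp only [ContinuousLinearMap.neg_apply, neg_inj]
      rw [key (EuclideanSpace.single j 1) i x (EuclideanSpace.single i 1), symm,
        ← key (EuclideanSpace.single i 1) i x (EuclideanSpace.single j 1), hdiag i, hT]
  rw [Finset.sum_congr rfl (fun i _ => hterm i)]
  have hcount : (∑ i : Fin n, (if i = j then T else -T))
      = (∑ i : Fin n, ((if i = j then 2 * T else 0) + -T)) := by
    apply Finset.sum_congr rfl
    intro i _
    by_cases hij : i = j <;> simp [hij] <;> ring
  rw [hcount, Finset.sum_add_distrib, Finset.sum_ite_eq' Finset.univ j (fun _ => 2 * T),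
    Finset.sum_const, Finset.card_univ, Fintype.card_fin]
  simp only [Finset.mem_univ, if_true, nsmul_eq_mul]
  ring
end
end

section
/- The function F : ℝ² → ℝ defined by F(x) = x₂ · ( arctan|x| / |x|³ − 1/(|x|²(|x|² + 1)) ) for x ≠ 0 and F(0) = 0 is smooth (C^∞) on all of ℝ² and bounded on ℝ². -/
noncomputable section

open FormalMultilinearSeries
open scoped ENNReal NNReal

def myc : ℕ → ℝ := fun n => (-1) ^ n * (2 * n + 2) / (2 * n + 3)

lemma myc_abs_le (n : ℕ) : ‖myc n‖ ≤ 1 := by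
  have h1 : (0:ℝ) < 2 * n + 3 := by positivity
  rw [myc, Real.norm_eq_abs, abs_div, abs_mul, abs_pow, abs_neg, abs_one, one_pow, one_mul,
    abs_of_pos (by positivity : (0:ℝ) < 2 * n + 2), abs_of_pos h1, div_le_one h1]
  linarith

lemma myc_radius : 1 ≤ (ofScalars ℝ myc).radius := by
  have := FormalMultilinearSeries.le_radius_of_bound (ofScalars ℝ myc) 1
    (r := 1) (fun n => by
      rw [NNReal.coe_one, one_pow, mul_one, FormalMultilinearSeries.ofScalars_norm]
      exact myc_abs_le n)
  simpa using this

def psi : ℝ → ℝ := ofScalarsSum myc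

lemma psi_analyticAt : AnalyticAt ℝ psi 0 := by
  have h : (0:ℝ≥0∞) < (ofScalars ℝ myc).radius := lt_of_lt_of_le (by norm_num) myc_radius
  exact ((ofScalars ℝ myc).hasFPowerSeriesOnBall h).analyticAt

lemma psi_hasSum {t : ℝ} (ht : |t| < 1) :
    HasSum (fun n => myc n * t ^ n) (psi t) := by
  have hmem : t ∈ Metric.eball (0:ℝ) (ofScalars ℝ myc).radius := by
    rw [EMetric.mem_ball, edist_zero_right]
    refine lt_of_lt_of_le ?_ myc_radius
    rwa [← ENNReal.coe_one, enorm_eq_nnnorm, ENNReal.coe_lt_coe, ← NNReal.coe_lt_coe, coe_nnnorm,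
      Real.norm_eq_abs, NNReal.coe_one]
  have h := (ofScalars ℝ myc).hasSum hmem
  have hfun : (fun n => (ofScalars ℝ myc) n fun _ => t) = fun n => myc n * t ^ n := by
    funext n
    rw [FormalMultilinearSeries.ofScalars_apply_eq, smul_eq_mul]
  rwa [hfun] at h

lemma key {r : ℝ} (h0 : 0 < r) (h1 : r < 1) :
    Real.arctan r / r ^ 3 - 1 / (r ^ 2 * (r ^ 2 + 1)) = psi (r ^ 2) := by
  have hr : r ≠ 0 := ne_of_gt h0
  have hA := Real.hasSum_arctan (x := r) (by rw [Real.norm_eq_abs, abs_of_pos h0]; exact h1)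
  have hB : HasSum (fun n : ℕ => (-r ^ 2) ^ n) (1 - (-r ^ 2))⁻¹ :=
    hasSum_geometric_of_norm_lt_one (by
      rw [norm_neg, Real.norm_eq_abs, abs_of_pos (by positivity)]; nlinarith)
  have hD := (hA.div_const (r ^ 3)).sub (hB.div_const (r ^ 2))
  set f : ℕ → ℝ := fun n => (-1) ^ n * r ^ (2 * n + 1) / ((2 * n + 1 : ℕ) : ℝ) / r ^ 3
      - (-r ^ 2) ^ n / r ^ 2 with hf
  have hf0 : f 0 = 0 := by
    simp only [hf]
    norm_num
    field_simp
    ring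
  have hshift := (hasSum_nat_add_iff' (f := f) 1).mpr hD
  have hterm : (fun n => f (n + 1)) = fun n => myc n * (r ^ 2) ^ n := by
    funext m
    have h3 : ((2 * (m:ℝ) + 3)) ≠ 0 := by positivity
    have e1 : (-r ^ 2 : ℝ) ^ (m + 1) = -((-1 : ℝ) ^ m * (r ^ 2) ^ m * r ^ 2) := by
      rw [neg_pow, pow_succ, pow_succ]; ring
    have e2 : r ^ (2 * (m + 1) + 1) = (r ^ 2) ^ m * r ^ 3 := by
      rw [← pow_mul, ← pow_add]
      congr 1
    simp only [hf, myc]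
    push_cast
    rw [e1, e2, pow_succ]
    field_simp
    ring
  rw [hterm] at hshift
  have hpsi := psi_hasSum (t := r ^ 2) (by rw [abs_of_pos (by positivity)]; nlinarith)
  have heq := hshift.unique hpsi
  rw [← heq, Finset.sum_range_one, hf0, sub_zero,
    show (1 : ℝ) - (-r ^ 2) = r ^ 2 + 1 by ring]
  field_simp

lemma coord_le (x : EuclideanSpace ℝ (Fin 2)) : |x 1| ≤ ‖x‖ := by
  rw [EuclideanSpace.norm_eq, ← Real.sqrt_sq_eq_abs]
  apply Real.sqrt_le_sqrt
  have := Finset.single_le_sum (f := fun i : Fin 2 => ‖x i‖ ^ 2)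
    (fun i _ => by positivity) (Finset.mem_univ 1)
  simpa [Real.norm_eq_abs, sq_abs] using this

lemma proj_eq : (fun y : EuclideanSpace ℝ (Fin 2) => y 1)
    = ⇑(EuclideanSpace.proj (1 : Fin 2) : EuclideanSpace ℝ (Fin 2) →L[ℝ] ℝ) := by
  funext y; simp

theorem smooth_bounded_F
    (F : EuclideanSpace ℝ (Fin 2) → ℝ)
    (hF0 : F 0 = 0)
    (hF : ∀ x : EuclideanSpace ℝ (Fin 2), x ≠ 0 →
      F x = x 1 * (Real.arctan ‖x‖ / ‖x‖ ^ 3 - 1 / (‖x‖ ^ 2 * (‖x‖ ^ 2 + 1)))) :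
    ContDiff ℝ (⊤ : ℕ∞) F ∧ ∃ C : ℝ, ∀ x, |F x| ≤ C := by
  have hproj : ContDiff ℝ (⊤ : ℕ∞) (fun y : EuclideanSpace ℝ (Fin 2) => y 1) := by
    rw [proj_eq]
    exact (EuclideanSpace.proj (1 : Fin 2) : EuclideanSpace ℝ (Fin 2) →L[ℝ] ℝ).contDiff
  have hsmooth : ContDiff ℝ (⊤ : ℕ∞) F := by
    rw [contDiff_iff_contDiffAt]
    intro x
    rcases eq_or_ne x 0 with hx | hx
    · subst hx
      have h2 : ContDiffAt ℝ (⊤ : ℕ∞) (fun y : EuclideanSpace ℝ (Fin 2) => psi (‖y‖ ^ 2)) 0 := by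
        have hg : ContDiffAt ℝ (⊤ : ℕ∞) psi (‖(0 : EuclideanSpace ℝ (Fin 2))‖ ^ 2) := by
          simpa using psi_analyticAt.contDiffAt
        exact hg.comp 0 (contDiff_norm_sq ℝ (E := EuclideanSpace ℝ (Fin 2))).contDiffAt
      have hG : ContDiffAt ℝ (⊤ : ℕ∞)
          (fun y : EuclideanSpace ℝ (Fin 2) => y 1 * psi (‖y‖ ^ 2)) 0 :=
        hproj.contDiffAt.mul h2
      refine hG.congr_of_eventuallyEq ?_
      filter_upwards [Metric.ball_mem_nhds (0 : EuclideanSpace ℝ (Fin 2)) one_pos] with y hy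
      rcases eq_or_ne y 0 with rfl | hy0
      · simpa using hF0
      · rw [hF y hy0, key (norm_pos_iff.mpr hy0) (by simpa using hy)]
    · have hnorm : ContDiffAt ℝ (⊤ : ℕ∞) (fun y : EuclideanSpace ℝ (Fin 2) => ‖y‖) x :=
        contDiffAt_norm ℝ hx
      have hx0 : (0:ℝ) < ‖x‖ := norm_pos_iff.mpr hx
      have h1 : ContDiffAt ℝ (⊤ : ℕ∞)
          (fun y : EuclideanSpace ℝ (Fin 2) => Real.arctan ‖y‖ / ‖y‖ ^ 3) x :=
        (Real.contDiff_arctan.contDiffAt.comp x hnorm).div (hnorm.pow 3)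
          (by positivity)
      have h2 : ContDiffAt ℝ (⊤ : ℕ∞)
          (fun y : EuclideanSpace ℝ (Fin 2) => 1 / (‖y‖ ^ 2 * (‖y‖ ^ 2 + 1))) x :=
        contDiffAt_const.div ((hnorm.pow 2).mul ((hnorm.pow 2).add contDiffAt_const))
          (by positivity)
      have hH : ContDiffAt ℝ (⊤ : ℕ∞) (fun y : EuclideanSpace ℝ (Fin 2) =>
          y 1 * (Real.arctan ‖y‖ / ‖y‖ ^ 3 - 1 / (‖y‖ ^ 2 * (‖y‖ ^ 2 + 1)))) x :=
        hproj.contDiffAt.mul (h1.sub h2)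
      refine hH.congr_of_eventuallyEq ?_
      filter_upwards [IsOpen.mem_nhds isOpen_compl_singleton hx] with y hy
      exact hF y hy
  refine ⟨hsmooth, ?_⟩
  obtain ⟨C₁, hC₁⟩ := (isCompact_closedBall (0 : EuclideanSpace ℝ (Fin 2)) 1).exists_bound_of_continuousOn
    hsmooth.continuous.continuousOn
  refine ⟨max C₁ (Real.pi / 2 + 1), fun x => ?_⟩
  by_cases hx : ‖x‖ ≤ 1
  · have := hC₁ x (by simpa [Metric.mem_closedBall, dist_zero_right] using hx)
    rw [Real.norm_eq_abs] at this
    exact this.trans (le_max_left _ _)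
  · push_neg at hx
    have hx0 : x ≠ 0 := by
      intro h; rw [h, norm_zero] at hx; linarith
    have hr0 : (0:ℝ) < ‖x‖ := by linarith
    set r := ‖x‖ with hrdef
    have ha : 0 ≤ Real.arctan r := by rw [← Real.arctan_zero]; exact Real.arctan_strictMono.monotone (le_of_lt hr0)
    have hb : Real.arctan r ≤ Real.pi / 2 := (Real.arctan_lt_pi_div_two r).le
    have habs : |Real.arctan r / r ^ 3 - 1 / (r ^ 2 * (r ^ 2 + 1))|
        ≤ Real.arctan r / r ^ 3 + 1 / (r ^ 2 * (r ^ 2 + 1)) := by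
      have h := abs_sub_le (Real.arctan r / r ^ 3) 0 (1 / (r ^ 2 * (r ^ 2 + 1)))
      simp only [sub_zero, zero_sub, abs_neg] at h
      refine h.trans ?_
      rw [abs_of_nonneg (by positivity), abs_of_nonneg (by positivity)]
    have key2 : r * (Real.arctan r / r ^ 3 + 1 / (r ^ 2 * (r ^ 2 + 1)))
        ≤ Real.pi / 2 + 1 := by
      have e3 : r * (Real.arctan r / r ^ 3 + 1 / (r ^ 2 * (r ^ 2 + 1)))
          = Real.arctan r / r ^ 2 + 1 / (r * (r ^ 2 + 1)) := by
        field_simp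
      rw [e3]
      have b1 : Real.arctan r / r ^ 2 ≤ Real.pi / 2 := by
        rw [div_le_iff₀ (by positivity)]
        nlinarith [Real.pi_pos, sq_nonneg (r - 1), sq_nonneg (r + 1)]
      have b2 : 1 / (r * (r ^ 2 + 1)) ≤ 1 := by
        rw [div_le_one (by positivity)]
        nlinarith [sq_nonneg (r - 1), sq_nonneg r]
      linarith
    calc |F x| = |x 1| * |Real.arctan r / r ^ 3 - 1 / (r ^ 2 * (r ^ 2 + 1))| := by
          rw [hF x hx0, abs_mul]
      _ ≤ r * (Real.arctan r / r ^ 3 + 1 / (r ^ 2 * (r ^ 2 + 1))) :=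
          mul_le_mul (coord_le x) habs (abs_nonneg _) (le_of_lt hr0)
      _ ≤ Real.pi / 2 + 1 := key2
      _ ≤ max C₁ (Real.pi / 2 + 1) := le_max_right _ _
end
end

section
/- Let λ ∈ ℝ and let φ : (0, ∞) → ℝ be a differentiable function satisfying r φ'(r) = λ r² + ((r² − 1)/(r² + 1)) φ(r) for all r > 0, and suppose φ is bounded on some interval (0, δ) with δ > 0. Then φ(r) = λ ((r² + 1)/r)(r − arctan r) for every r > 0. -/
noncomputable section

theorem ode_solution_const_lambda (lam : ℝ) (φ : ℝ → ℝ)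
    (hdiff : ∀ r : ℝ, 0 < r → DifferentiableAt ℝ φ r)
    (hode : ∀ r : ℝ, 0 < r →
      r * deriv φ r = lam * r ^ 2 + ((r ^ 2 - 1) / (r ^ 2 + 1)) * φ r)
    (hbdd : ∃ δ : ℝ, 0 < δ ∧ ∃ C : ℝ, ∀ r ∈ Set.Ioo (0 : ℝ) δ, |φ r| ≤ C) :
    ∀ r : ℝ, 0 < r → φ r = lam * ((r ^ 2 + 1) / r) * (r - Real.arctan r) := by
  set ψ : ℝ → ℝ := fun r => φ r * (r / (r ^ 2 + 1)) - lam * (r - Real.arctan r) with hψdef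
  -- ψ has zero derivative on Ioi 0
  have hpos : ∀ r : ℝ, (0:ℝ) < r ^ 2 + 1 := fun r => by positivity
  have hψderiv : ∀ r : ℝ, 0 < r → HasDerivAt ψ 0 r := by
    intro r hr
    have hr0 : r ≠ 0 := ne_of_gt hr
    have hd : (r:ℝ) ^ 2 + 1 ≠ 0 := ne_of_gt (hpos r)
    have hφ : HasDerivAt φ (deriv φ r) r := (hdiff r hr).hasDerivAt
    have hg : HasDerivAt (fun x : ℝ => x / (x ^ 2 + 1))
        ((1 * (r ^ 2 + 1) - r * (2 * r)) / (r ^ 2 + 1) ^ 2) r := by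
      have h1 : HasDerivAt (fun x : ℝ => x) 1 r := hasDerivAt_id r
      have h2 : HasDerivAt (fun x : ℝ => x ^ 2 + 1) (2 * r) r := by
        simpa using ((hasDerivAt_pow 2 r).add_const 1)
      exact h1.div h2 hd
    have harctan : HasDerivAt (fun x : ℝ => lam * (x - Real.arctan x))
        (lam * (1 - 1 / (1 + r ^ 2))) r :=
      (((hasDerivAt_id r).sub (Real.hasDerivAt_arctan r))).const_mul lam
    have hmul := (hφ.mul hg).sub harctan
    have hode' := hode r hr
    have hderivφ : deriv φ r = (lam * r ^ 2 + ((r ^ 2 - 1) / (r ^ 2 + 1)) * φ r) / r := by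
      rw [eq_div_iff hr0]
      linear_combination hode'
    refine hmul.congr_deriv ?_
    rw [hderivφ]
    field_simp
    ring
  -- ψ is constant on Ioi 0
  have hψdiff : DifferentiableOn ℝ ψ (Set.Ioi (0:ℝ)) := fun x hx =>
    ((hψderiv x hx).differentiableAt).differentiableWithinAt
  have hconst : ∀ x ∈ Set.Ioi (0:ℝ), ∀ y ∈ Set.Ioi (0:ℝ), ψ x = ψ y := by
    intro x hx y hy
    refine (convex_Ioi (0:ℝ)).is_const_of_fderivWithin_eq_zero hψdiff ?_ hx hy
    intro z hz
    rw [fderivWithin_of_isOpen isOpen_Ioi hz]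
    ext
    simp [← toSpanSingleton_deriv, (hψderiv z hz).deriv]
  obtain ⟨δ, hδ, C, hC⟩ := hbdd
  -- The constant value: c = ψ 1
  set c : ℝ := ψ 1 with hc
  have hψc : ∀ r ∈ Set.Ioi (0:ℝ), ψ r = c := fun r hr =>
    hconst r hr 1 (by norm_num)
  -- ψ tends to 0 as r → 0+
  have hCnn : 0 ≤ C := le_trans (abs_nonneg _) (hC (δ/2) ⟨by linarith, by linarith⟩)
  have htend1 : Filter.Tendsto (fun r : ℝ => φ r * (r / (r ^ 2 + 1)))
      (nhdsWithin 0 (Set.Ioi 0)) (nhds 0) := by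
    refine squeeze_zero_norm' (a := fun r => C * |r / (r ^ 2 + 1)|) ?_ ?_
    · filter_upwards [Ioo_mem_nhdsGT_of_mem (Set.left_mem_Ico.2 hδ)] with r hr
      have hr0 : 0 < r := hr.1
      have : |φ r * (r / (r ^ 2 + 1))| = |φ r| * |r / (r ^ 2 + 1)| := abs_mul _ _
      rw [Real.norm_eq_abs, this]
      exact mul_le_mul_of_nonneg_right (hC r hr) (abs_nonneg _)
    · have hcont : Filter.Tendsto (fun r : ℝ => C * |r / (r ^ 2 + 1)|)
          (nhds 0) (nhds (C * |(0:ℝ) / ((0:ℝ) ^ 2 + 1)|)) := by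
        apply Filter.Tendsto.const_mul
        apply Filter.Tendsto.abs
        exact (continuous_id.div (by continuity) (fun x => ne_of_gt (hpos x))).tendsto 0
      simpa using hcont.mono_left nhdsWithin_le_nhds
  have htend2 : Filter.Tendsto (fun r : ℝ => lam * (r - Real.arctan r))
      (nhdsWithin 0 (Set.Ioi 0)) (nhds 0) := by
    have : Filter.Tendsto (fun r : ℝ => lam * (r - Real.arctan r))
        (nhds 0) (nhds (lam * ((0:ℝ) - Real.arctan 0))) :=
      (Filter.Tendsto.const_mul lam ((continuous_id.sub Real.continuous_arctan).tendsto 0))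
    simpa using this.mono_left nhdsWithin_le_nhds
  have htendψ : Filter.Tendsto ψ (nhdsWithin 0 (Set.Ioi 0)) (nhds 0) := by
    simpa using htend1.sub htend2
  have htendc : Filter.Tendsto ψ (nhdsWithin 0 (Set.Ioi 0)) (nhds c) := by
    refine Filter.Tendsto.congr' ?_ tendsto_const_nhds
    filter_upwards [self_mem_nhdsWithin] with r hr
    exact (hψc r hr).symm
  have hc0 : c = 0 := tendsto_nhds_unique htendc htendψ
  -- conclude
  intro r hr
  have hr0 : r ≠ 0 := ne_of_gt hr
  have hd : (r:ℝ) ^ 2 + 1 ≠ 0 := ne_of_gt (hpos r)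
  have h := hψc r hr
  rw [hc0, hψdef] at h
  simp only [sub_eq_zero] at h
  field_simp at h ⊢
  linarith [h]
end
end

section
/- Let λ : [0, ∞) → ℝ be a continuous function and let φ : (0, ∞) → ℝ be a differentiable function satisfying r φ'(r) = λ(r) r² + ((r² − 1)/(r² + 1)) φ(r) for all r > 0, and suppose φ is bounded on some interval (0, δ) with δ > 0. Then φ(r) = ((r² + 1)/r) ∫₀^r (s²/(s² + 1)) λ(s) ds for every r > 0. -/
noncomputable section

open Set Filter Topology intervalIntegral

theorem ode_solution_variable_lambda (lam : ℝ → ℝ) (φ : ℝ → ℝ)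
    (hlam : ContinuousOn lam (Set.Ici (0 : ℝ)))
    (hdiff : ∀ r : ℝ, 0 < r → DifferentiableAt ℝ φ r)
    (hode : ∀ r : ℝ, 0 < r →
      r * deriv φ r = lam r * r ^ 2 + ((r ^ 2 - 1) / (r ^ 2 + 1)) * φ r)
    (hbdd : ∃ δ : ℝ, 0 < δ ∧ ∃ C : ℝ, ∀ r ∈ Set.Ioo (0 : ℝ) δ, |φ r| ≤ C) :
    ∀ r : ℝ, 0 < r →
      φ r = ((r ^ 2 + 1) / r) * ∫ s in (0 : ℝ)..r, (s ^ 2 / (s ^ 2 + 1)) * lam s := by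
  obtain ⟨δ, hδ, C, hC⟩ := hbdd
  set f : ℝ → ℝ := fun s => s ^ 2 / (s ^ 2 + 1) * lam s with hf_def
  have hden : ∀ s : ℝ, s ^ 2 + 1 ≠ 0 := fun s => by positivity
  have hfc : ContinuousOn f (Ici 0) := by
    apply ContinuousOn.mul _ hlam
    exact ContinuousOn.div (by fun_prop) (by fun_prop) (fun s _ => hden s)
  intro r hr
  set g : ℝ → ℝ := fun x => x / (x ^ 2 + 1) * φ x with hg_def
  have hgderiv : ∀ x : ℝ, 0 < x → HasDerivAt g (f x) x := by
    intro x hx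
    have hφ : HasDerivAt φ (deriv φ x) x := (hdiff x hx).hasDerivAt
    have hm : HasDerivAt (fun y : ℝ => y / (y ^ 2 + 1))
        ((1 * (x ^ 2 + 1) - x * (2 * x)) / (x ^ 2 + 1) ^ 2) x := by
      have h1 : HasDerivAt (fun y : ℝ => y) 1 x := hasDerivAt_id x
      have h2 : HasDerivAt (fun y : ℝ => y ^ 2 + 1) (2 * x) x := by
        simpa using ((hasDerivAt_pow 2 x).add_const 1)
      exact h1.div h2 (hden x)
    have hprod := hm.mul hφ
    convert hprod using 1
    case e'_4 => rfl
    case e'_5 => rfl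
    case e'_8 => rfl
    have ho := hode x hx
    have hx' : x ≠ 0 := ne_of_gt hx
    have hd : deriv φ x = (lam x * x ^ 2 + (x ^ 2 - 1) / (x ^ 2 + 1) * φ x) / x := by
      rw [eq_div_iff hx']
      linear_combination ho
    show x ^ 2 / (x ^ 2 + 1) * lam x = _
    rw [hd]
    field_simp
    ring
  -- integrability of f on subintervals of [0, r]
  have hint : ∀ a b : ℝ, 0 ≤ a → a ≤ b → IntervalIntegrable f MeasureTheory.volume a b := by
    intro a b ha hab
    apply (hfc.mono ?_).intervalIntegrable
    intro x hx
    rw [uIcc_of_le hab] at hx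
    exact le_trans ha hx.1
  have key : ∀ ε ∈ Ioo (0:ℝ) r, ∫ s in ε..r, f s = g r - g ε := by
    intro ε hε
    apply intervalIntegral.integral_eq_sub_of_hasDerivAt
    · intro x hx
      rw [uIcc_of_le hε.2.le] at hx
      exact hgderiv x (lt_of_lt_of_le hε.1 hx.1)
    · exact hint ε r hε.1.le hε.2.le
  -- bound for f on [0, r]
  obtain ⟨M, hM⟩ := (isCompact_Icc (a := (0:ℝ)) (b := r)).exists_bound_of_continuousOn
    (hfc.mono Icc_subset_Ici_self)
  have hM0 : 0 ≤ M := le_trans (norm_nonneg _) (hM 0 ⟨le_rfl, hr.le⟩)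
  -- tendsto of integral
  have hT1 : Tendsto (fun ε => ∫ s in ε..r, f s) (𝓝[>] 0) (𝓝 (∫ s in (0:ℝ)..r, f s)) := by
    have heq : ∀ ε ∈ Ioo (0:ℝ) r,
        (∫ s in ε..r, f s) = (∫ s in (0:ℝ)..r, f s) - ∫ s in (0:ℝ)..ε, f s := by
      intro ε hε
      rw [eq_sub_iff_add_eq]
      rw [add_comm]
      exact intervalIntegral.integral_add_adjacent_intervals
        (hint 0 ε le_rfl hε.1.le) (hint ε r hε.1.le hε.2.le)
    have h0 : Tendsto (fun ε => ∫ s in (0:ℝ)..ε, f s) (𝓝[>] 0) (𝓝 0) := by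
      apply squeeze_zero_norm' (a := fun ε => M * ε) ?_ ?_
      · filter_upwards [Ioo_mem_nhdsGT_of_mem ⟨le_rfl, hr⟩] with ε hε
        calc ‖∫ s in (0:ℝ)..ε, f s‖ ≤ M * |ε - 0| := by
              apply intervalIntegral.norm_integral_le_of_norm_le_const
              intro x hx
              rw [uIoc_of_le hε.1.le] at hx
              exact hM x ⟨hx.1.le, le_trans hx.2 hε.2.le⟩
          _ = M * ε := by rw [sub_zero, abs_of_pos hε.1]
      · have : Tendsto (fun ε : ℝ => M * ε) (𝓝[>] 0) (𝓝 (M * 0)) :=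
          (tendsto_const_nhds.mul tendsto_id).mono_left nhdsWithin_le_nhds
        simpa using this
    have := (tendsto_const_nhds (x := ∫ s in (0:ℝ)..r, f s) (f := 𝓝[>] (0:ℝ))).sub h0
    rw [sub_zero] at this
    apply this.congr'
    filter_upwards [Ioo_mem_nhdsGT_of_mem ⟨le_rfl, hr⟩] with ε hε
    exact (heq ε hε).symm
  -- tendsto of g r - g ε
  have hg0 : Tendsto g (𝓝[>] 0) (𝓝 0) := by
    have hC0 : 0 ≤ C := le_trans (abs_nonneg _) (hC (δ/2) ⟨by linarith, by linarith⟩)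
    apply squeeze_zero_norm' (a := fun ε => ε * C) ?_ ?_
    · filter_upwards [Ioo_mem_nhdsGT_of_mem ⟨le_rfl, hδ⟩] with ε hε
      calc ‖g ε‖ = (ε / (ε ^ 2 + 1)) * |φ ε| := by
            rw [hg_def]
            simp only [norm_mul, Real.norm_eq_abs]
            rw [abs_of_pos (div_pos hε.1 (by positivity))]
        _ ≤ ε * C := by
            apply mul_le_mul ?_ (hC ε hε) (abs_nonneg _) hε.1.le
            rw [div_le_iff₀ (by positivity)]
            nlinarith [sq_nonneg ε, hε.1]
    · have : Tendsto (fun ε : ℝ => ε * C) (𝓝[>] 0) (𝓝 (0 * C)) :=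
        (tendsto_id.mul tendsto_const_nhds).mono_left nhdsWithin_le_nhds
      simpa using this
  have hT2 : Tendsto (fun ε => g r - g ε) (𝓝[>] 0) (𝓝 (g r)) := by
    have := (tendsto_const_nhds (x := g r) (f := 𝓝[>] (0:ℝ))).sub hg0
    simpa using this
  have hEq : (∫ s in (0:ℝ)..r, f s) = g r := by
    apply tendsto_nhds_unique (hT1.congr' ?_) hT2
    filter_upwards [Ioo_mem_nhdsGT_of_mem ⟨le_rfl, hr⟩] with ε hε
    exact key ε hε
  have hr' : r ≠ 0 := ne_of_gt hr
  rw [show (∫ s in (0:ℝ)..r, s ^ 2 / (s ^ 2 + 1) * lam s) = ∫ s in (0:ℝ)..r, f s from rfl,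
    hEq, hg_def]
  field_simp
end
end
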